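/- arXiv:2203.00004 — 4 statements merged into one kernel-verified Lean document; each statement's English description precedes it below -/
import Mathlib

section
/- Suppose L is symmetric with orthonormal eigenpairs (λ_j, v^{(j)}), each 0 < c²λ_j < 4, and write 2 - c²λ_j = 2cos ω_j with ω_j ∈ (0,π). Then the solution of u(t) = 2u(t-1) - u(t-2) - c²L u(t-1) with initial condition u(-1) = u(0) is u(t) = Σ_j ⟨u(0), v^{(j)}⟩ (p_j e^{i t ω_j} + q_j e^{-i t ω_j}) v^{(j)}, where p_j = (1 + i tan(ω_j/2))/2 and q_j = (1 - i tan(ω_j/2))/2. -/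
open Complex

noncomputable def waveCoef (ω : ℝ) (t : ℤ) : ℂ :=
  (1 + I * Real.tan (ω / 2)) / 2 * Complex.exp (I * t * ω) +
  (1 - I * Real.tan (ω / 2)) / 2 * Complex.exp (-(I * t * ω))

lemma waveCoef_zero (ω : ℝ) : waveCoef ω 0 = 1 := by
  simp [waveCoef]; ring

lemma exp_twocos (ω : ℝ) :
    Complex.exp (I * ω) + Complex.exp (-(I * ω)) = 2 * Real.cos ω := by
  have h1 : (I * ω : ℂ) = (ω : ℂ) * I := by ring
  have h2 : (-(I * ω) : ℂ) = (-ω : ℂ) * I := by push_cast; ring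
  rw [h2, h1, Complex.exp_mul_I, Complex.exp_mul_I, Complex.cos_neg, Complex.sin_neg,
    ← Complex.ofReal_cos]
  ring

lemma waveCoef_neg_one (ω : ℝ) (h0 : 0 < ω) (h1 : ω < Real.pi) :
    waveCoef ω (-1) = 1 := by
  have hcos : Real.cos (ω / 2) ≠ 0 := by
    apply ne_of_gt
    apply Real.cos_pos_of_mem_Ioo
    constructor <;> [linarith [Real.pi_pos]; linarith]
  have hsin : Real.sin ω = 2 * Real.sin (ω / 2) * Real.cos (ω / 2) := by
    rw [show ω = 2 * (ω / 2) by ring, Real.sin_two_mul]; ring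
  have hcos2 : Real.cos ω = 1 - 2 * Real.sin (ω / 2) ^ 2 := by
    have h := Real.cos_two_mul' (ω / 2)
    rw [show (2:ℝ) * (ω / 2) = ω by ring] at h
    nlinarith [Real.sin_sq_add_cos_sq (ω / 2)]
  have htan : Real.tan (ω / 2) * Real.sin ω = 1 - Real.cos ω := by
    rw [Real.tan_eq_sin_div_cos, hsin, hcos2]
    field_simp
    ring
  have hexp1 : Complex.exp (I * ((-1 : ℤ) : ℂ) * ω) = Real.cos ω - Real.sin ω * I := by
    have : (I * ((-1 : ℤ) : ℂ) * ω : ℂ) = (-ω : ℂ) * I := by push_cast; ring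
    rw [this, Complex.exp_mul_I, Complex.cos_neg, Complex.sin_neg, ← Complex.ofReal_cos,
      ← Complex.ofReal_sin]
    ring
  have hexp2 : Complex.exp (-(I * ((-1 : ℤ) : ℂ) * ω)) = Real.cos ω + Real.sin ω * I := by
    have : (-(I * ((-1 : ℤ) : ℂ) * ω) : ℂ) = (ω : ℂ) * I := by push_cast; ring
    rw [this, Complex.exp_mul_I, ← Complex.ofReal_cos, ← Complex.ofReal_sin]
  rw [waveCoef, hexp1, hexp2]
  have hts : ((Real.tan (ω / 2) : ℂ)) * ((Real.sin ω : ℂ)) = 1 - (Real.cos ω : ℂ) := by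
    rw [← Complex.ofReal_mul, htan]; push_cast; ring
  have hI : (I : ℂ) ^ 2 = -1 := Complex.I_sq
  linear_combination (-(((Real.tan (ω / 2) : ℂ)) * ((Real.sin ω : ℂ)))) * hI + hts

lemma waveCoef_rec (ω : ℝ) (t : ℤ) :
    waveCoef ω t = 2 * (Real.cos ω : ℂ) * waveCoef ω (t-1) - waveCoef ω (t-2) := by
  have e1 : Complex.exp (I * ((t : ℤ) : ℂ) * ω) =
      Complex.exp (I * (((t-1 : ℤ)) : ℂ) * ω) * Complex.exp (I * ω) := by
    rw [← Complex.exp_add]; congr 1; push_cast; ring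
  have e2 : Complex.exp (I * (((t-2 : ℤ)) : ℂ) * ω) =
      Complex.exp (I * (((t-1 : ℤ)) : ℂ) * ω) * Complex.exp (-(I * ω)) := by
    rw [← Complex.exp_add]; congr 1; push_cast; ring
  have e3 : Complex.exp (-(I * ((t : ℤ) : ℂ) * ω)) =
      Complex.exp (-(I * (((t-1 : ℤ)) : ℂ) * ω)) * Complex.exp (-(I * ω)) := by
    rw [← Complex.exp_add]; congr 1; push_cast; ring
  have e4 : Complex.exp (-(I * (((t-2 : ℤ)) : ℂ) * ω)) =
      Complex.exp (-(I * (((t-1 : ℤ)) : ℂ) * ω)) * Complex.exp (I * ω) := by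
    rw [← Complex.exp_add]; congr 1; push_cast; ring
  simp only [waveCoef]
  rw [← exp_twocos, e1, e2, e3, e4]
  ring

open Complex in
lemma wave_columns_orth {N : ℕ} (v : Fin N → Fin N → ℝ)
    (horth : ∀ j k, (∑ i, v j i * v k i) = if j = k then 1 else 0) :
    ∀ i k, (∑ j, v j i * v j k) = if i = k then 1 else 0 := by
  have hMM : (Matrix.of v) * (Matrix.of v).transpose = 1 := by
    ext j k
    simpa [Matrix.mul_apply, Matrix.one_apply] using horth j k
  have hMM' : (Matrix.of v).transpose * (Matrix.of v) = 1 := mul_eq_one_comm.mp hMM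
  intro i k
  have := congrFun (congrFun hMM' i) k
  simpa [Matrix.mul_apply, Matrix.one_apply] using this

open Complex in
lemma wave_complete {N : ℕ} (v : Fin N → Fin N → ℝ)
    (horth : ∀ j k, (∑ i, v j i * v k i) = if j = k then 1 else 0)
    (w : Fin N → ℝ) (i : Fin N) :
    ∑ j, (∑ k, w k * v j k) * v j i = w i := by
  have hcol := wave_columns_orth v horth
  calc ∑ j, (∑ k, w k * v j k) * v j i
      = ∑ j, ∑ k, w k * (v j k * v j i) := by
        apply Finset.sum_congr rfl; intro j _; rw [Finset.sum_mul]; apply Finset.sum_congr rfl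
        intro k _; ring
    _ = ∑ k, ∑ j, w k * (v j k * v j i) := Finset.sum_comm
    _ = ∑ k, w k * (if k = i then 1 else 0) := by
        apply Finset.sum_congr rfl; intro k _
        rw [← Finset.mul_sum, hcol k i]
    _ = w i := by simp

open Complex in
/-- Solution of the discretized graph wave equation with u(-1) = u(0):
u(t) = Σ_j ⟨u(0), v⁽ʲ⁾⟩ (p_j e^{itω_j} + q_j e^{-itω_j}) v⁽ʲ⁾ where
p_j = (1 + i tan(ω_j/2))/2 and q_j = (1 - i tan(ω_j/2))/2. -/
theorem wave_equation_solution
    (N : ℕ) (L : Matrix (Fin N) (Fin N) ℝ) (hLsymm : L.IsSymm)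
    (lam : Fin N → ℝ) (v : Fin N → Fin N → ℝ)
    (heig : ∀ j, L.mulVec (v j) = lam j • v j)
    (horth : ∀ j k, (∑ i, v j i * v k i) = if j = k then 1 else 0)
    (c : ℝ) (hc : 0 < c) (hlam : ∀ j, 0 < c^2 * lam j ∧ c^2 * lam j < 4)
    (ω : Fin N → ℝ) (hω : ∀ j, 0 < ω j ∧ ω j < Real.pi)
    (hcos : ∀ j, 2 - c^2 * lam j = 2 * Real.cos (ω j))
    (u : ℤ → Fin N → ℝ)
    (hinit : u (-1) = u 0)
    (hrec : ∀ t : ℤ, 1 ≤ t →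
      u t = fun i => 2 * u (t-1) i - u (t-2) i - c^2 * L.mulVec (u (t-1)) i) :
    ∀ t : ℤ, 0 ≤ t → ∀ i : Fin N,
      (u t i : ℂ) = ∑ j, ((∑ k, u 0 k * v j k : ℝ) : ℂ) *
        ((1 + I * Real.tan (ω j / 2)) / 2 * Complex.exp (I * t * ω j) +
         (1 - I * Real.tan (ω j / 2)) / 2 * Complex.exp (-(I * t * ω j))) * v j i := by
  -- restate goal using waveCoef
  set b : Fin N → ℝ := fun j => ∑ k, u 0 k * v j k with hb
  have goal_eq : ∀ t : ℤ, ∀ i,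
      (∑ j, ((∑ k, u 0 k * v j k : ℝ) : ℂ) *
        ((1 + I * Real.tan (ω j / 2)) / 2 * Complex.exp (I * t * ω j) +
         (1 - I * Real.tan (ω j / 2)) / 2 * Complex.exp (-(I * t * ω j))) * v j i)
      = ∑ j, (b j : ℂ) * waveCoef (ω j) t * (v j i : ℂ) := by
    intro t i; rfl
  -- key facts
  have hcomp : ∀ i, (∑ j, (b j : ℂ) * (v j i : ℂ)) = (u 0 i : ℂ) := by
    intro i
    have h := wave_complete v horth (u 0) i
    calc ∑ j, (b j : ℂ) * (v j i : ℂ) = ((∑ j, b j * v j i : ℝ) : ℂ) := by push_cast; ring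
      _ = (u 0 i : ℂ) := by simp only [hb]; exact congrArg (fun x : ℝ => (x : ℂ)) h
  -- the main induction
  have key : ∀ n : ℕ,
      (∀ i, ((u ((n : ℤ) - 1) i : ℝ) : ℂ) = ∑ j, (b j : ℂ) * waveCoef (ω j) ((n : ℤ) - 1) * (v j i : ℂ))
      ∧ (∀ i, ((u (n : ℤ) i : ℝ) : ℂ) = ∑ j, (b j : ℂ) * waveCoef (ω j) (n : ℤ) * (v j i : ℂ)) := by
    intro n
    induction n with
    | zero =>
      constructor
      · intro i
        have h0 : (((0 : ℕ) : ℤ) - 1) = (-1 : ℤ) := by norm_num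
        rw [h0, hinit]
        have hw : ∀ j : Fin N, waveCoef (ω j) (-1) = 1 := fun j =>
          waveCoef_neg_one (ω j) (hω j).1 (hω j).2
        simp only [hw, mul_one]
        exact (hcomp i).symm
      · intro i
        have h0 : (((0 : ℕ) : ℤ)) = (0 : ℤ) := by norm_num
        rw [h0]
        simp only [waveCoef_zero, mul_one]
        exact (hcomp i).symm
    | succ n ih =>
      have hstep : ∀ i, ((u ((n : ℤ) + 1) i : ℝ) : ℂ)
          = ∑ j, (b j : ℂ) * waveCoef (ω j) ((n : ℤ) + 1) * (v j i : ℂ) := by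
        intro i
        -- recurrence at t = n+1
        have hr := hrec ((n : ℤ) + 1) (by omega)
        have hri := congrFun hr i
        have h1 : ((n : ℤ) + 1) - 1 = (n : ℤ) := by ring
        have h2 : ((n : ℤ) + 1) - 2 = (n : ℤ) - 1 := by ring
        rw [h1, h2] at hri
        -- cast to ℂ
        have hriC : ((u ((n : ℤ) + 1) i : ℝ) : ℂ)
            = 2 * ((u (n : ℤ) i : ℝ) : ℂ) - ((u ((n : ℤ) - 1) i : ℝ) : ℂ)
              - (c : ℂ)^2 * ((L.mulVec (u (n : ℤ)) i : ℝ) : ℂ) := by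
          rw [hri]; push_cast; ring
        -- the mulVec term
        have hmv : ((L.mulVec (u (n : ℤ)) i : ℝ) : ℂ)
            = ∑ j, (b j : ℂ) * waveCoef (ω j) (n : ℤ) * ((lam j : ℂ) * (v j i : ℂ)) := by
          have hmv0 : L.mulVec (u (n : ℤ)) i = ∑ k, L i k * u (n : ℤ) k := rfl
          rw [hmv0]
          push_cast
          calc ∑ k, (L i k : ℂ) * ((u (n : ℤ) k : ℝ) : ℂ)
              = ∑ k, (L i k : ℂ) * ∑ j, (b j : ℂ) * waveCoef (ω j) (n : ℤ) * (v j k : ℂ) := by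
                apply Finset.sum_congr rfl; intro k _; rw [ih.2 k]
            _ = ∑ k, ∑ j, (b j : ℂ) * waveCoef (ω j) (n : ℤ) * ((L i k : ℂ) * (v j k : ℂ)) := by
                apply Finset.sum_congr rfl; intro k _; rw [Finset.mul_sum]
                apply Finset.sum_congr rfl; intro j _; ring
            _ = ∑ j, ∑ k, (b j : ℂ) * waveCoef (ω j) (n : ℤ) * ((L i k : ℂ) * (v j k : ℂ)) :=
                Finset.sum_comm
            _ = ∑ j, (b j : ℂ) * waveCoef (ω j) (n : ℤ) * ((lam j : ℂ) * (v j i : ℂ)) := by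
                apply Finset.sum_congr rfl; intro j _
                rw [← Finset.mul_sum]
                congr 1
                have he : (∑ k, L i k * v j k) = lam j * v j i := by
                  have := congrFun (heig j) i
                  simpa [Matrix.mulVec, dotProduct] using this
                have heC := congrArg (fun x : ℝ => (x : ℂ)) he
                push_cast at heC
                exact heC
        rw [hriC, hmv, ih.1 i, ih.2 i, Finset.mul_sum, Finset.mul_sum,
          ← Finset.sum_sub_distrib, ← Finset.sum_sub_distrib]
        apply Finset.sum_congr rfl; intro j _
        have hrc := waveCoef_rec (ω j) ((n : ℤ) + 1)
        rw [h1, h2] at hrc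
        have hcj : (2 : ℂ) - (c : ℂ)^2 * (lam j : ℂ) = 2 * ((Real.cos (ω j) : ℝ) : ℂ) := by
          exact_mod_cast congrArg (fun x : ℝ => (x : ℂ)) (hcos j)
        linear_combination (-((b j : ℂ) * (v j i : ℂ))) * hrc
          + ((b j : ℂ) * (v j i : ℂ) * waveCoef (ω j) (n : ℤ)) * hcj
      constructor
      · intro i
        have h3 : ((n + 1 : ℕ) : ℤ) - 1 = (n : ℤ) := by push_cast; ring
        rw [h3]; exact ih.2 i
      · intro i
        have h4 : ((n + 1 : ℕ) : ℤ) = (n : ℤ) + 1 := by push_cast; ring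
        rw [h4]; exact hstep i
  intro t ht i
  rw [goal_eq t i]
  have htn : t = ((t.toNat : ℕ) : ℤ) := by omega
  rw [htn]
  exact (key t.toNat).2 i
end

section
/- If the symmetric matrix L has simple eigenvalue 0 and all other eigenvalues in (0, 4/c²), then the companion matrix M of the wave equation with 0 < c < √2 has at most 2N eigenvalues, of which exactly 2N−1 are distinct nontrivial unit-modulus values when the λ_j (j≥2) are distinct: the double eigenvalue 1 (from λ_1 = 0) and conjugate pairs e^{±iω_j} for each λ_j > 0. -/
/-!
Conjugating `M` by `diag(Vᵀ, Vᵀ)`, where the columns of `Vᵀ` are the orthonormal eigenvectors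
`v j` of `L`, turns it into `[[diag(2 - c²λ_j), -1], [1, 0]]`, whose characteristic polynomial is
`∏_j (X² - (2 - c²λ_j) X + 1) = ∏_j (X - e^{iθ_j}) (X - e^{-iθ_j})`, where `θ_j = 0` at the index
with `λ_j = 0` and `θ_j = ω_j` otherwise. The angles `±θ_j` lie in `(-π, π)`, where `t ↦ e^{it}` is
injective, and they are pairwise distinct except for `0 = -0`: `cos θ_j` determines `λ_j`, and `λ`
is strictly monotone. So `1` is a double root and every other root is simple.
-/

open Polynomial Matrix Complex Set Function
open scoped Real

theorem Polynomial.roots_univ_prod_X_sub_C {R ι : Type*} [CommRing R] [IsDomain R] [Fintype ι]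
    (f : ι → R) : (∏ i, (X - C (f i))).roots = Finset.univ.val.map f := by
  rw [← roots_multiset_prod_X_sub_C (Finset.univ.val.map f), Multiset.map_map]
  rfl

theorem Matrix.spectrum_eq_range_of_charpoly_eq_prod {K m ι : Type*} [Field K] [Fintype m]
    [DecidableEq m] [Fintype ι] {A : Matrix m m K} {f : ι → K}
    (h : A.charpoly = ∏ i, (X - C (f i))) : spectrum K A = range f := by
  ext x
  rw [mem_spectrum_iff_isRoot_charpoly, ← mem_roots (charpoly_monic A).ne_zero, h,
    roots_univ_prod_X_sub_C]
  simp

namespace Matrix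

variable {n R : Type*} [Fintype n] [DecidableEq n] [CommRing R]

theorem det_fromBlocks_mul_det_of_commute (A B C D : Matrix n n R) (h : Commute C D) :
    det (fromBlocks A B C D) * det D = det (A * D - B * C) * det D := by
  have hmul : fromBlocks A B C D * fromBlocks D 0 (-C) 1 = fromBlocks (A * D - B * C) B 0 D := by
    rw [fromBlocks_multiply]
    congr 1 <;> simp [h.eq, sub_eq_add_neg]
  calc det (fromBlocks A B C D) * det D
      = det (fromBlocks A B C D * fromBlocks D 0 (-C) 1) := by
        rw [det_mul, det_fromBlocks_zero₁₂, det_one, mul_one]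
    _ = det (A * D - B * C) * det D := by rw [hmul, det_fromBlocks_zero₂₁]

/-- Maps `(u_k, u_{k-1})` to `(u_{k+1}, u_k)` for the recurrence `u_{k+1} = A u_k - u_{k-1}`. -/
def waveCompanion (A : Matrix n n R) : Matrix (n ⊕ n) (n ⊕ n) R := fromBlocks A (-1) 1 0

theorem charpoly_waveCompanion (A : Matrix n n R) :
    (waveCompanion A).charpoly = det (charmatrix A * scalar n (X : R[X]) + 1) := by
  have hblocks : charmatrix (waveCompanion A) =
      fromBlocks (charmatrix A) 1 (-1) (scalar n (X : R[X])) := by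
    have hneg : (-1 : Matrix n n R).map C = -1 := by simp [← RingHom.mapMatrix_apply]
    simp [waveCompanion, charmatrix_fromBlocks, charmatrix_zero, hneg]
  have hX : det (scalar n (X : R[X])) = X ^ Fintype.card n := by simp
  apply (isRegular_X_pow (R := R) (Fintype.card n)).right
  dsimp only
  rw [← hX, charpoly, hblocks,
    det_fromBlocks_mul_det_of_commute _ _ _ _ (Commute.one_left _).neg_left, Matrix.one_mul,
    sub_neg_eq_add]

theorem charpoly_waveCompanion_diagonal (d : n → R) :
    (waveCompanion (diagonal d)).charpoly = ∏ j, (X ^ 2 - C (d j) * X + 1) := by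
  rw [charpoly_waveCompanion, charmatrix_diagonal, scalar_apply, diagonal_mul_diagonal,
    ← diagonal_one, diagonal_add, det_diagonal]
  refine Finset.prod_congr rfl fun j _ => ?_
  ring

theorem charpoly_waveCompanion_of_mul_eq_mul_diagonal {A P Q : Matrix n n R} {d : n → R}
    (hPQ : P * Q = 1) (hAP : A * P = P * diagonal d) :
    (waveCompanion A).charpoly = ∏ j, (X ^ 2 - C (d j) * X + 1) := by
  have hQP : Q * P = 1 := mul_eq_one_comm.mp hPQ
  let U : (Matrix (n ⊕ n) (n ⊕ n) R)ˣ :=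
    ⟨fromBlocks P 0 0 P, fromBlocks Q 0 0 Q, by simp [fromBlocks_multiply, hPQ],
      by simp [fromBlocks_multiply, hQP]⟩
  have hconj : waveCompanion A = U.val * waveCompanion (diagonal d) * U⁻¹.val := by
    have hA : P * diagonal d * Q = A := by rw [← hAP, Matrix.mul_assoc, hPQ, Matrix.mul_one]
    simp [U, waveCompanion, fromBlocks_multiply, hA, hPQ]
  rw [hconj, coe_units_inv, charpoly_units_conj, charpoly_waveCompanion_diagonal]

theorem mul_transpose_of_mulVec_eq_smul {L : Matrix n n R} {v : n → n → R} {lam : n → R}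
    (h : ∀ j, L *ᵥ v j = lam j • v j) : L * (of v)ᵀ = (of v)ᵀ * diagonal lam := by
  ext i j
  rw [mul_diagonal]
  simpa [mul_apply, mulVec, dotProduct, mul_comm] using congrFun (h j) i

end Matrix

theorem Complex.exp_mul_I_injOn : InjOn (fun t : ℝ => exp (t * I)) (Ioc (-π) π) := by
  intro x hx y hy h
  have hx' := arg_cos_add_sin_mul_I hx
  dsimp only at h
  rwa [← exp_mul_I, h, exp_mul_I, arg_cos_add_sin_mul_I hy, eq_comm] at hx'

theorem X_sq_sub_two_cos_mul_X_add_one (x : ℂ) :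
    (X ^ 2 - C (2 * cos x) * X + 1 : ℂ[X]) = (X - C (exp (x * I))) * (X - C (exp (-x * I))) := by
  have hprod : exp (x * I) * exp (-x * I) = 1 := by rw [← exp_add]; simp
  rw [two_cos, C_add, ← C_1, ← hprod, C_mul]
  ring

section Angles

variable {n : Type*}

theorem update_mem_Ico [DecidableEq n] {ω : n → ℝ} {j₀ : n} (hω : ∀ j ≠ j₀, ω j ∈ Ioo 0 π)
    (j : n) : update ω j₀ 0 j ∈ Ico 0 π := by
  rcases eq_or_ne j j₀ with rfl | hj
  · simp [Real.pi_pos]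
  · rw [update_of_ne hj]
    exact Ioo_subset_Ico_self (hω j hj)

theorem two_cos_update [DecidableEq n] {ω d : n → ℝ} {j₀ : n} (hd₀ : d j₀ = 2)
    (hω : ∀ j ≠ j₀, 2 * Real.cos (ω j) = d j) (j : n) : 2 * Real.cos (update ω j₀ 0 j) = d j := by
  rcases eq_or_ne j j₀ with rfl | hj
  · simp [hd₀]
  · rw [update_of_ne hj, hω j hj]

theorem injective_of_two_cos_eq {θ lam : n → ℝ} {c : ℝ}
    (h : ∀ j, 2 * Real.cos (θ j) = 2 - c ^ 2 * lam j) (hc : c ≠ 0) (hlam : Injective lam) :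
    Injective θ := by
  refine Injective.of_comp (f := Real.cos) fun j k hjk => hlam ?_
  have hj := h j
  have hk := h k
  simp only [Function.comp_apply] at hjk
  exact mul_left_cancel₀ (pow_ne_zero 2 hc) (by linarith)

def signedAngle (θ : n → ℝ) : n ⊕ n → ℝ := Sum.elim θ (-θ)

theorem prod_X_sq_sub_two_cos_mul_X_add_one [Fintype n] (θ : n → ℝ) :
    ∏ j, (X ^ 2 - C (2 * cos (θ j : ℂ)) * X + 1) =
      ∏ k, (X - C (exp (signedAngle θ k * I))) := by
  simp_rw [X_sq_sub_two_cos_mul_X_add_one]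
  rw [Fintype.prod_sum_type, Finset.prod_mul_distrib]
  simp [signedAngle]

variable {θ : n → ℝ}

theorem signedAngle_mem_Ioc (hθ : ∀ j, θ j ∈ Ico 0 π) (k : n ⊕ n) :
    signedAngle θ k ∈ Ioc (-π) π := by
  rcases k with j | j <;> simp only [signedAngle, Sum.elim_inl, Sum.elim_inr, Pi.neg_apply] <;>
    constructor <;> linarith [(hθ j).1, (hθ j).2]

variable {j₀ : n}

theorem signedAngle_eq_zero_iff (hinj : Injective θ) (h₀ : θ j₀ = 0) {k : n ⊕ n} :
    signedAngle θ k = 0 ↔ k = .inl j₀ ∨ k = .inr j₀ := by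
  rcases k with j | j <;>
    simp only [signedAngle, Sum.elim_inl, Sum.elim_inr, Pi.neg_apply, neg_eq_zero] <;>
    rw [← h₀, hinj.eq_iff] <;> simp

theorem injOn_signedAngle (hθ : ∀ j, θ j ∈ Ico 0 π) (hinj : Injective θ) (h₀ : θ j₀ = 0) :
    InjOn (signedAngle θ) {.inr j₀}ᶜ := by
  have hzero : ∀ j k, θ j = -θ k → k = j₀ := fun j k h =>
    hinj (by linarith [(hθ j).1, (hθ k).1])
  rintro (j | j) hj (k | k) hk h <;> simp only [signedAngle, Sum.elim_inl, Sum.elim_inr,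
    Pi.neg_apply, neg_inj, mem_compl_iff, mem_singleton_iff] at h hj hk
  · rw [hinj h]
  · exact (hk (congrArg _ (hzero j k h))).elim
  · exact (hj (congrArg _ (hzero k j (by linarith)))).elim
  · rw [hinj h]

theorem exp_signedAngle_eq_one_iff (hθ : ∀ j, θ j ∈ Ico 0 π) (hinj : Injective θ)
    (h₀ : θ j₀ = 0) {k : n ⊕ n} :
    exp (signedAngle θ k * I) = 1 ↔ k = .inl j₀ ∨ k = .inr j₀ := by
  rw [← signedAngle_eq_zero_iff hinj h₀, ← exp_zero, ← zero_mul I, ← ofReal_zero]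
  exact exp_mul_I_injOn.eq_iff (signedAngle_mem_Ioc hθ k)
    ⟨by linarith [Real.pi_pos], Real.pi_pos.le⟩

theorem count_one_map_exp_signedAngle [Fintype n] (hθ : ∀ j, θ j ∈ Ico 0 π) (hinj : Injective θ)
    (h₀ : θ j₀ = 0) :
    (Finset.univ.val.map fun k => exp (signedAngle θ k * I)).count 1 = 2 := by
  classical
  rw [Multiset.count_map, ← Finset.filter_val, Finset.card_val]
  simp_rw [eq_comm (a := (1 : ℂ)), exp_signedAngle_eq_one_iff hθ hinj h₀]
  rw [Finset.filter_or, Finset.filter_eq', Finset.filter_eq']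
  simp

theorem card_image_exp_signedAngle [Fintype n] [DecidableEq n] (hθ : ∀ j, θ j ∈ Ico 0 π)
    (hinj : Injective θ) (h₀ : θ j₀ = 0) :
    (Finset.univ.image fun k => exp (signedAngle θ k * I)).card = 2 * Fintype.card n - 1 := by
  have hcollide : exp (signedAngle θ (.inr j₀) * I) = exp (signedAngle θ (.inl j₀) * I) := by
    rw [(exp_signedAngle_eq_one_iff hθ hinj h₀).mpr (.inr rfl),
      (exp_signedAngle_eq_one_iff hθ hinj h₀).mpr (.inl rfl)]
  have himage : (Finset.univ.image fun k => exp (signedAngle θ k * I)) =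
      ({.inr j₀}ᶜ : Finset (n ⊕ n)).image fun k => exp (signedAngle θ k * I) := by
    refine (Finset.image_subset_image (Finset.subset_univ _)).antisymm' fun x hx => ?_
    obtain ⟨k, -, rfl⟩ := Finset.mem_image.mp hx
    by_cases hk : k = .inr j₀
    · exact Finset.mem_image.mpr ⟨.inl j₀, by simp, by rw [hk, hcollide]⟩
    · exact Finset.mem_image_of_mem _ (by simpa using hk)
  have hinjOn : InjOn (fun k => exp (signedAngle θ k * I)) ↑({.inr j₀}ᶜ : Finset (n ⊕ n)) :=
    exp_mul_I_injOn.comp (by simpa using injOn_signedAngle hθ hinj h₀)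
      fun k _ => signedAngle_mem_Ioc hθ k
  rw [himage, Finset.card_image_of_injOn hinjOn, Finset.card_compl, Fintype.card_sum,
    Finset.card_singleton]
  omega

theorem range_exp_signedAngle (h₀ : θ j₀ = 0) :
    range (fun k => exp (signedAngle θ k * I)) =
      {1} ∪ ⋃ j ∈ {j | j ≠ j₀}, {exp (I * θ j), exp (-(I * θ j))} := by
  ext x
  simp only [mem_range, Sum.exists, signedAngle, Sum.elim_inl, Sum.elim_inr, Pi.neg_apply,
    ofReal_neg, neg_mul, mem_union, mem_singleton_iff, mem_iUnion, mem_ofPred_eq, mem_insert_iff,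
    exists_prop, mul_comm I]
  constructor
  · rintro (⟨j, rfl⟩ | ⟨j, rfl⟩) <;> rcases eq_or_ne j j₀ with rfl | hj
    all_goals first
      | exact .inl (by simp [h₀])
      | exact .inr ⟨j, hj, by simp⟩
  · rintro (rfl | ⟨j, -, rfl | rfl⟩)
    · exact .inl ⟨j₀, by simp [h₀]⟩
    · exact .inl ⟨j, rfl⟩
    · exact .inr ⟨j, rfl⟩

theorem charpoly_map_waveCompanion_eq_prod [Fintype n] [DecidableEq n] {A P Q : Matrix n n ℝ}
    (hPQ : P * Q = 1) (hAP : A * P = P * diagonal fun j => 2 * Real.cos (θ j)) :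
    ((waveCompanion A).map ofReal).charpoly = ∏ k, (X - C (exp (signedAngle θ k * I))) := by
  rw [← prod_X_sq_sub_two_cos_mul_X_add_one,
    show (waveCompanion A).map ofReal = (waveCompanion A).map ofRealHom from rfl, charpoly_map,
    charpoly_waveCompanion_of_mul_eq_mul_diagonal hPQ hAP, Polynomial.map_prod]
  refine Finset.prod_congr rfl fun j _ => ?_
  simp

end Angles

open Complex in
theorem companion_spectrum_structure_general
    (N : ℕ) [NeZero N]
    (L : Matrix (Fin N) (Fin N) ℝ)
    (lam : Fin N → ℝ) (v : Fin N → Fin N → ℝ)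
    (heig : ∀ j, L.mulVec (v j) = lam j • v j)
    (horth : ∀ j k, (∑ i, v j i * v k i) = if j = k then 1 else 0)
    (c : ℝ) (hc : 0 < c)
    (hlam0 : lam 0 = 0) (hmono : StrictMono lam)
    (ω : Fin N → ℝ)
    (hω : ∀ j, j ≠ 0 → 0 < ω j ∧ ω j < Real.pi ∧
          2 * Real.cos (ω j) = 2 - c^2 * lam j)
    (M : Matrix (Fin N ⊕ Fin N) (Fin N ⊕ Fin N) ℝ)
    (hM : M = Matrix.fromBlocks ((2 : ℝ) • 1 - (c^2) • L) (-1) 1 0)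
    (Mc : Matrix (Fin N ⊕ Fin N) (Fin N ⊕ Fin N) ℂ)
    (hMc : Mc = M.map Complex.ofReal) :
    spectrum ℂ Mc =
      {1} ∪ (⋃ j ∈ {j : Fin N | j ≠ 0},
        {Complex.exp (I * ω j), Complex.exp (-(I * ω j))}) ∧
    (spectrum ℂ Mc).ncard = 2 * N - 1 ∧
    (∀ α ∈ spectrum ℂ Mc, ‖α‖ = 1) ∧
    Polynomial.rootMultiplicity 1 Mc.charpoly = 2 := by
  set θ := update ω 0 0
  have hθ₀ : θ 0 = 0 := update_self ..
  have hθmem : ∀ j, θ j ∈ Ico 0 π := update_mem_Ico fun j hj => ⟨(hω j hj).1, (hω j hj).2.1⟩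
  have hθcos : ∀ j, 2 * Real.cos (θ j) = 2 - c ^ 2 * lam j :=
    two_cos_update (by simp [hlam0]) fun j hj => (hω j hj).2.2
  have hθinj : Injective θ := injective_of_two_cos_eq hθcos hc.ne' hmono.injective
  have hAV : ((2 : ℝ) • 1 - c ^ 2 • L) * (of v)ᵀ =
      (of v)ᵀ * diagonal fun j => 2 * Real.cos (θ j) := by
    refine mul_transpose_of_mulVec_eq_smul fun j => ?_
    simp [hθcos, sub_mulVec, smul_mulVec, heig, sub_smul, smul_smul]
  have hcharpoly : Mc.charpoly = ∏ k, (X - C (exp (signedAngle θ k * I))) := by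
    rw [hMc, hM]
    exact charpoly_map_waveCompanion_eq_prod (mul_eq_one_comm.mp (by ext j k; exact horth j k)) hAV
  have hspec := spectrum_eq_range_of_charpoly_eq_prod hcharpoly
  refine ⟨?_, ?_, ?_, ?_⟩
  · rw [hspec, range_exp_signedAngle hθ₀]
    exact congrArg _ (iUnion₂_congr fun j hj => by rw [show θ j = ω j from update_of_ne hj ..])
  · rw [hspec, ← image_univ, ← Finset.coe_univ, ← Finset.coe_image, ncard_coe_finset,
      card_image_exp_signedAngle hθmem hθinj hθ₀, Fintype.card_fin]
  · rw [hspec]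
    rintro _ ⟨k, rfl⟩
    exact norm_exp_ofReal_mul_I _
  · rw [← count_roots, hcharpoly, roots_univ_prod_X_sub_C,
      count_one_map_exp_signedAngle hθmem hθinj hθ₀]

open Complex in
/-- If the symmetric matrix L has simple eigenvalue 0 and all other eigenvalues
distinct in (0, 4/c²), the companion matrix M of the wave equation has spectrum
consisting of exactly 2N-1 distinct unit-modulus values: the double eigenvalue 1
(from λ₁ = 0) and conjugate pairs e^{±iω_j} for each λ_j > 0. -/
theorem companion_spectrum_structure
    (N : ℕ) [NeZero N]
    (L : Matrix (Fin N) (Fin N) ℝ) (hLsymm : L.IsSymm)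
    (lam : Fin N → ℝ) (v : Fin N → Fin N → ℝ)
    (heig : ∀ j, L.mulVec (v j) = lam j • v j)
    (horth : ∀ j k, (∑ i, v j i * v k i) = if j = k then 1 else 0)
    (c : ℝ) (hc : 0 < c) (hc2 : c < Real.sqrt 2)
    (hlam0 : lam 0 = 0) (hmono : StrictMono lam)
    (hlt : ∀ j, lam j < 4 / c^2)
    (ω : Fin N → ℝ)
    (hω : ∀ j, j ≠ 0 → 0 < ω j ∧ ω j < Real.pi ∧
          2 * Real.cos (ω j) = 2 - c^2 * lam j)
    (M : Matrix (Fin N ⊕ Fin N) (Fin N ⊕ Fin N) ℝ)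
    (hM : M = Matrix.fromBlocks ((2 : ℝ) • 1 - (c^2) • L) (-1) 1 0)
    (Mc : Matrix (Fin N ⊕ Fin N) (Fin N ⊕ Fin N) ℂ)
    (hMc : Mc = M.map Complex.ofReal) :
    spectrum ℂ Mc =
      {1} ∪ (⋃ j ∈ {j : Fin N | j ≠ 0},
        {Complex.exp (I * ω j), Complex.exp (-(I * ω j))}) ∧
    (spectrum ℂ Mc).ncard = 2 * N - 1 ∧
    (∀ α ∈ spectrum ℂ Mc, ‖α‖ = 1) ∧
    Polynomial.rootMultiplicity 1 Mc.charpoly = 2 :=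
  companion_spectrum_structure_general N L lam v heig horth c hc hlam0 hmono ω hω M hM Mc hMc
end

section
/- Let u(t) solve the graph wave equation from Lemma (wave solution) with random initial condition satisfying ⟨u(0), v^{(j)}⟩ ≠ 0 for all j. Then for each node l, the coefficient of e^{iω_j t} in the scalar signal u_l(t) equals p_j ⟨u(0), v^{(j)}⟩ v_l^{(j)}; in particular, across nodes l these coefficients are proportional to the entries v_l^{(j)} of the j-th Laplacian eigenvector with a common nonzero constant p_j⟨u(0), v^{(j)}⟩. -/
open Complex in
/-- Linear independence of powers of distinct complex numbers. -/
lemma vand_zero {M : ℕ} (w : Fin M → ℂ) (hw : Function.Injective w)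
    (c : Fin M → ℂ) (h : ∀ t : ℕ, ∑ i, c i * w i ^ t = 0) : ∀ i, c i = 0 := by
  have hdet : (Matrix.vandermonde w).det ≠ 0 := by
    rw [Matrix.det_vandermonde]
    refine Finset.prod_ne_zero_iff.mpr fun i _ => Finset.prod_ne_zero_iff.mpr fun j hj => ?_
    have : i ≠ j := by
      simp only [Finset.mem_filter, Finset.mem_Ioi] at hj
      exact fun e => absurd (e ▸ hj) (lt_irrefl i)
    exact sub_ne_zero_of_ne fun e => this (hw e.symm)
  have hv : Matrix.vecMul c (Matrix.vandermonde w) = 0 := by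
    funext j
    simpa [Matrix.vecMul, Matrix.vandermonde, dotProduct] using h j
  intro i
  have := Matrix.eq_zero_of_vecMul_eq_zero hdet hv
  exact congrFun this i

open Complex in
lemma exp_indep {ι : Type*} [Fintype ι] (w : ι → ℂ) (hw : Function.Injective w)
    (c : ι → ℂ) (h : ∀ t : ℕ, ∑ i, c i * w i ^ t = 0) : ∀ i, c i = 0 := by
  let e := (Fintype.equivFin ι).symm
  have h' : ∀ t : ℕ, ∑ i, (c ∘ e) i * (w ∘ e) i ^ t = 0 := by
    intro t
    rw [← h t]
    exact Fintype.sum_equiv e _ _ fun i => rfl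
  intro i
  have := vand_zero (w ∘ e) (hw.comp e.injective) (c ∘ e) h' (e.symm i)
  simpa using this

open Complex in
lemma exp_I_eq {x y : ℝ} (h : Complex.exp (I * x) = Complex.exp (I * y)) :
    ∃ n : ℤ, x = y + n * (2 * Real.pi) := by
  rw [Complex.exp_eq_exp_iff_exists_int] at h
  obtain ⟨n, hn⟩ := h
  refine ⟨n, ?_⟩
  have hn' : I * (x : ℂ) = I * ((y : ℂ) + (n : ℂ) * (2 * (Real.pi : ℂ))) := by
    rw [hn]; ring
  have := mul_left_cancel₀ Complex.I_ne_zero hn'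
  exact_mod_cast this

open Complex in
/-- In the wave-equation solution, the coefficient of e^{iω_j t} in the scalar
signal u_l(t) is the unique such coefficient and equals p_j ⟨u(0), v⁽ʲ⁾⟩ v_l⁽ʲ⁾,
with common nonzero constant p_j ⟨u(0), v⁽ʲ⁾⟩ across nodes l. -/
theorem local_coefficients_proportional_to_eigenvector
    (N : ℕ) (ω : Fin N → ℝ)
    (hω : ∀ j, 0 < ω j ∧ ω j < Real.pi) (hdist : Function.Injective ω)
    (v : Fin N → Fin N → ℝ) (u0 : Fin N → ℝ)
    (hproj : ∀ j, (∑ k, u0 k * v j k) ≠ 0)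
    (p q : Fin N → ℂ)
    (hp : ∀ j, p j = (1 + I * Real.tan (ω j / 2)) / 2)
    (hq : ∀ j, q j = (1 - I * Real.tan (ω j / 2)) / 2)
    (u : Fin N → ℤ → ℂ)
    (hu : ∀ l t, u l t = ∑ j, ((∑ k, u0 k * v j k : ℝ) : ℂ) *
      (p j * Complex.exp (I * t * ω j) + q j * Complex.exp (-(I * t * ω j))) * v j l) :
    ∀ l : Fin N,
      (∀ b b' : Fin N → ℂ,
        (∀ t : ℤ, u l t = ∑ j, (b j * Complex.exp (I * t * ω j) +
                                 b' j * Complex.exp (-(I * t * ω j)))) →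
        ∀ j, b j = p j * ((∑ k, u0 k * v j k : ℝ) : ℂ) * v j l) ∧
      ∀ j, p j * ((∑ k, u0 k * v j k : ℝ) : ℂ) ≠ 0 := by
  have hpi := Real.pi_pos
  have h2pi : (0:ℝ) ≤ 2 * Real.pi := by linarith
  intro l
  constructor
  · intro b b' hb j
    set c : Fin N → ℂ := fun j => ((∑ k, u0 k * v j k : ℝ) : ℂ) with hc
    set w : Fin N ⊕ Fin N → ℂ :=
      Sum.elim (fun j => Complex.exp (I * ω j)) (fun j => Complex.exp (-(I * ω j))) with hwdef
    set d : Fin N ⊕ Fin N → ℂ :=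
      Sum.elim (fun j => b j - p j * c j * v j l) (fun j => b' j - q j * c j * v j l) with hddef
    have nzero : ∀ n : ℤ, ∀ x y : ℝ, -Real.pi < x - y → x - y < Real.pi →
        x = y + n * (2 * Real.pi) → n = 0 := by
      intro n x y h1 h2 h3
      rcases lt_trichotomy n 0 with h | h | h
      · exfalso
        have hle : (n : ℝ) ≤ -1 := by exact_mod_cast Int.le_sub_one_of_lt h
        have := mul_le_mul_of_nonneg_right hle h2pi
        linarith
      · exact h
      · exfalso
        have hle : (1:ℝ) ≤ (n : ℝ) := by exact_mod_cast h
        have := mul_le_mul_of_nonneg_right hle h2pi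
        linarith
    have hwinj : Function.Injective w := by
      rintro (a | a) (b | b) hab <;>
        simp only [hwdef, Sum.elim_inl, Sum.elim_inr] at hab
      · obtain ⟨n, hn⟩ := exp_I_eq hab
        obtain ⟨h1, h2⟩ := hω a; obtain ⟨h3, h4⟩ := hω b
        have hn0 : n = 0 := nzero n _ _ (by linarith) (by linarith) hn
        rw [hn0] at hn; simp at hn
        exact congrArg Sum.inl (hdist hn)
      · exfalso
        have hab' : Complex.exp (I * (ω a : ℝ)) = Complex.exp (I * ((-(ω b) : ℝ))) := by
          rw [hab]; push_cast; ring_nf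
        obtain ⟨n, hn⟩ := exp_I_eq hab'
        obtain ⟨h1, h2⟩ := hω a; obtain ⟨h3, h4⟩ := hω b
        rcases lt_trichotomy n 0 with h | h | h
        · have hle : (n : ℝ) ≤ -1 := by exact_mod_cast Int.le_sub_one_of_lt h
          have := mul_le_mul_of_nonneg_right hle h2pi
          linarith
        · rw [h] at hn; simp at hn; linarith
        · have hle : (1:ℝ) ≤ (n : ℝ) := by exact_mod_cast h
          have := mul_le_mul_of_nonneg_right hle h2pi
          linarith
      · exfalso
        have hab' : Complex.exp (I * ((-(ω a)) : ℝ)) = Complex.exp (I * (ω b : ℝ)) := by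
          rw [← hab]; push_cast; ring_nf
        obtain ⟨n, hn⟩ := exp_I_eq hab'
        obtain ⟨h1, h2⟩ := hω a; obtain ⟨h3, h4⟩ := hω b
        rcases lt_trichotomy n 0 with h | h | h
        · have hle : (n : ℝ) ≤ -1 := by exact_mod_cast Int.le_sub_one_of_lt h
          have := mul_le_mul_of_nonneg_right hle h2pi
          linarith
        · rw [h] at hn; simp at hn; linarith
        · have hle : (1:ℝ) ≤ (n : ℝ) := by exact_mod_cast h
          have := mul_le_mul_of_nonneg_right hle h2pi
          linarith
      · have hab' : Complex.exp (I * ((-(ω a)) : ℝ)) = Complex.exp (I * ((-(ω b)) : ℝ)) := by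
          push_cast
          rw [show I * -(ω a : ℂ) = -(I * (ω a : ℂ)) by ring,
            show I * -(ω b : ℂ) = -(I * (ω b : ℂ)) by ring, hab]
        obtain ⟨n, hn⟩ := exp_I_eq hab'
        obtain ⟨h1, h2⟩ := hω a; obtain ⟨h3, h4⟩ := hω b
        have hn0 : n = 0 := nzero n _ _ (by linarith) (by linarith) hn
        rw [hn0] at hn; simp at hn
        exact congrArg Sum.inr (hdist (by linarith))
    have hsum : ∀ t : ℕ, ∑ i, d i * w i ^ t = 0 := by
      intro t
      have key : ∑ j, c j * (p j * Complex.exp (I * ((t : ℤ) : ℂ) * ω j)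
            + q j * Complex.exp (-(I * ((t : ℤ) : ℂ) * ω j))) * v j l
          = ∑ j, (b j * Complex.exp (I * ((t : ℤ) : ℂ) * ω j)
            + b' j * Complex.exp (-(I * ((t : ℤ) : ℂ) * ω j))) := by
        rw [← hu l t, hb t]
      calc ∑ i, d i * w i ^ t
          = ∑ j, (b j - p j * c j * v j l) * Complex.exp (I * ω j) ^ t
            + ∑ j, (b' j - q j * c j * v j l) * Complex.exp (-(I * ω j)) ^ t := by
            rw [hddef, hwdef, Fintype.sum_sum_type]
            simp only [Sum.elim_inl, Sum.elim_inr]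
        _ = (∑ j, (b j * Complex.exp (I * ((t : ℤ) : ℂ) * ω j)
              + b' j * Complex.exp (-(I * ((t : ℤ) : ℂ) * ω j))))
            - ∑ j, c j * (p j * Complex.exp (I * ((t : ℤ) : ℂ) * ω j)
              + q j * Complex.exp (-(I * ((t : ℤ) : ℂ) * ω j))) * v j l := by
            rw [← Finset.sum_sub_distrib, ← Finset.sum_add_distrib]
            refine Finset.sum_congr rfl fun j _ => ?_
            have e1 : Complex.exp (I * (ω j : ℂ)) ^ t
                = Complex.exp (I * ((t : ℤ) : ℂ) * ω j) := by
              rw [← Complex.exp_nat_mul]; push_cast; ring_nf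
            have e2 : Complex.exp (-(I * (ω j : ℂ))) ^ t
                = Complex.exp (-(I * ((t : ℤ) : ℂ) * ω j)) := by
              rw [← Complex.exp_nat_mul]; push_cast; ring_nf
            rw [e1, e2]; ring
        _ = 0 := by rw [key, sub_self]
    have := exp_indep w hwinj d hsum (Sum.inl j)
    simp only [hddef, Sum.elim_inl, sub_eq_zero] at this
    rw [this]
  · intro j
    apply mul_ne_zero
    · rw [hp j]
      intro h
      have h2 : (1 : ℂ) + I * Real.tan (ω j / 2) = 0 :=
        (div_eq_zero_iff.mp h).resolve_right two_ne_zero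
      have := congrArg Complex.re h2
      simp only [Complex.add_re, Complex.one_re, Complex.mul_re, Complex.I_re,
        Complex.I_im, Complex.ofReal_re, Complex.ofReal_im, Complex.zero_re] at this
      norm_num at this
    · exact Complex.ofReal_ne_zero.mpr (hproj j)
end

section
/- If 0 < c < √2 and u(-1) = u(0), then every solution of the discretized wave equation on a graph with normalized Laplacian L remains bounded for all t ≥ 0: sup_t ‖u(t)‖ < ∞. -/
/-!
Conjugating by `D^{1/2}`, where `D` is the degree matrix, turns the normalized Laplacian `L` into a
symmetric matrix `S` with the same eigenvalues, and Gershgorin's theorem puts these in `[0, 2]`.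
In an orthonormal eigenbasis of `S` the scheme decouples into scalar recurrences
`y t = μ y (t - 1) - y (t - 2)` with `μ = 2 - c² λ ∈ (-2, 2]` (this is where `c² < 2` enters),
and each of these conserves `y t ^ 2 + y (t - 1) ^ 2 - μ y t y (t - 1)`, a positive definite form
when `|μ| < 2`. For `μ = 2` the form degenerates to `(y t - y (t - 1)) ^ 2`, and the initial
condition `y (-1) = y 0` then forces `y` to be constant.
-/

open Matrix Module WithLp
open scoped RealInnerProductSpace

theorem chebyshev_recurrence_invariant {μ : ℝ} {y : ℤ → ℝ} (hinit : y (-1) = y 0)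
    (hrec : ∀ t : ℤ, 1 ≤ t → y t = μ * y (t - 1) - y (t - 2)) (t : ℤ) (ht : 0 ≤ t) :
    y t ^ 2 + y (t - 1) ^ 2 - μ * y t * y (t - 1) = (2 - μ) * y 0 ^ 2 := by
  induction t, ht using Int.leInduction with
  | base => rw [zero_sub, hinit]; ring
  | succ t ht ih =>
    have hstep := hrec (t + 1) (by omega)
    rw [add_sub_cancel_right, show t + 1 - 2 = t - 1 by ring] at hstep
    rw [add_sub_cancel_right, hstep]
    linear_combination ih

theorem mul_sq_le_of_chebyshev_recurrence {μ : ℝ} (hμ : μ ≤ 2) {y : ℤ → ℝ}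
    (hinit : y (-1) = y 0) (hrec : ∀ t : ℤ, 1 ≤ t → y t = μ * y (t - 1) - y (t - 2))
    (t : ℤ) (ht : 0 ≤ t) : (2 + μ) * y t ^ 2 ≤ 4 * y 0 ^ 2 := by
  have hinv := chebyshev_recurrence_invariant hinit hrec
  rcases hμ.lt_or_eq with hlt | rfl
  · -- `4 (y_t² + y_{t-1}² - μ y_t y_{t-1}) = (2 y_{t-1} - μ y_t)² + (4 - μ²) y_t²`
    have key : (2 - μ) * ((2 + μ) * y t ^ 2) ≤ (2 - μ) * (4 * y 0 ^ 2) := by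
      nlinarith [hinv t ht, sq_nonneg (2 * y (t - 1) - μ * y t)]
    exact le_of_mul_le_mul_left key (by linarith)
  · have hconst : ∀ t : ℤ, 0 ≤ t → y t = y 0 := by
      intro t ht
      induction t, ht using Int.leInduction with
      | base => rfl
      | succ t ht ih =>
        have h := hinv (t + 1) (by omega)
        rw [add_sub_cancel_right, ih] at h
        nlinarith [sq_nonneg (y (t + 1) - y 0)]
    rw [hconst t ht]
    linarith

theorem LinearMap.IsSymmetric.exists_norm_le_of_chebyshev_recurrence
    {E : Type*} [NormedAddCommGroup E] [InnerProductSpace ℝ E] [FiniteDimensional ℝ E]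
    {T : E →ₗ[ℝ] E} (hT : T.IsSymmetric) (hspec : ∀ μ, End.HasEigenvalue T μ → μ ∈ Set.Ioc (-2) 2)
    {x : ℤ → E} (hinit : x (-1) = x 0) (hrec : ∀ t : ℤ, 1 ≤ t → x t = T (x (t - 1)) - x (t - 2)) :
    ∃ C, ∀ t : ℤ, 0 ≤ t → ‖x t‖ ≤ C := by
  set b := hT.eigenvectorBasis rfl
  set ev := hT.eigenvalues rfl
  have hev : ∀ k, ev k ∈ Set.Ioc (-2) 2 := fun k => hspec _ (hT.hasEigenvalue_eigenvalues rfl k)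
  have hmode : ∀ k, ∀ t : ℤ, 0 ≤ t → (2 + ev k) * ⟪b k, x t⟫ ^ 2 ≤ 4 * ⟪b k, x 0⟫ ^ 2 := by
    intro k
    refine mul_sq_le_of_chebyshev_recurrence (hev k).2 (by rw [hinit]) fun t ht => ?_
    rw [hrec t ht, inner_sub_right, ← hT, hT.apply_eigenvectorBasis, real_inner_smul_left]
    rfl
  refine ⟨√(∑ k, 4 * ⟪b k, x 0⟫ ^ 2 / (2 + ev k)), fun t ht => Real.le_sqrt_of_sq_le ?_⟩
  rw [← b.sum_sq_inner_right]
  refine Finset.sum_le_sum fun k _ => ?_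
  rw [le_div_iff₀' (by linarith [(hev k).1])]
  exact hmode k t ht

theorem Module.End.HasEigenvalue.div_of_smul {K V : Type*} [Field K] [AddCommGroup V] [Module K V]
    {f : End K V} {a μ : K} (ha : a ≠ 0) (h : (a • f).HasEigenvalue μ) :
    f.HasEigenvalue (μ / a) := by
  rw [End.hasEigenvalue_iff, End.eigenspace_def] at h
  show End.genEigenspace f (μ / a) 1 ≠ ⊥
  rwa [End.genEigenspace_div f μ a ha]

theorem LinearMap.IsSymmetric.exists_norm_le_of_wave_recurrence
    {E : Type*} [NormedAddCommGroup E] [InnerProductSpace ℝ E] [FiniteDimensional ℝ E]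
    {S : E →ₗ[ℝ] E} (hS : S.IsSymmetric) (hspec : ∀ μ, End.HasEigenvalue S μ → μ ∈ Set.Icc 0 2)
    {c : ℝ} (hc : c ≠ 0) (hc2 : c ^ 2 < 2) {x : ℤ → E} (hinit : x (-1) = x 0)
    (hrec : ∀ t : ℤ, 1 ≤ t → x t = (2 : ℝ) • x (t - 1) - x (t - 2) - c ^ 2 • S (x (t - 1))) :
    ∃ C, ∀ t : ℤ, 0 ≤ t → ‖x t‖ ≤ C := by
  refine (LinearMap.IsSymmetric.id.smul (conj_trivial (2 : ℝ)) |>.sub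
    (hS.smul (conj_trivial (c ^ 2)))).exists_norm_le_of_chebyshev_recurrence (fun ν hν => ?_) hinit
    fun t ht => by
      rw [hrec t ht, sub_apply, smul_apply, smul_apply, id_apply]
      abel
  rw [End.hasEigenvalue_sub'_iff] at hν
  have hc2pos : 0 < c ^ 2 := by positivity
  obtain ⟨h0, h2⟩ := hspec _ (hν.div_of_smul hc2pos.ne')
  rw [le_div_iff₀ hc2pos] at h0
  rw [div_le_iff₀ hc2pos] at h2
  constructor <;> nlinarith

section Graph

variable {ι : Type*} [Fintype ι]

noncomputable def sqrtDegree (W : Matrix ι ι ℝ) (i : ι) : ℝ := √(∑ l, W i l)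

theorem sqrtDegree_pos {W : Matrix ι ι ℝ} (hdeg : ∀ i, 0 < ∑ l, W i l) (i : ι) :
    0 < sqrtDegree W i :=
  Real.sqrt_pos.mpr (hdeg i)

variable [DecidableEq ι]

theorem Matrix.diagonal_conj_mulVec_diagonal {s : ι → ℝ} (hs : ∀ i, s i ≠ 0)
    (A : Matrix ι ι ℝ) (w : ι → ℝ) :
    (diagonal s * A * diagonal s⁻¹) *ᵥ (diagonal s *ᵥ w) = diagonal s *ᵥ (A *ᵥ w) := by
  have hinv : diagonal s⁻¹ * diagonal s = 1 := by
    rw [diagonal_mul_diagonal, ← diagonal_one]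
    exact congrArg diagonal (funext fun i => inv_mul_cancel₀ (hs i))
  rw [mulVec_mulVec, mul_assoc, hinv, mul_one, ← mulVec_mulVec]

theorem Matrix.hasEigenvalue_toLin'_of_diagonal_conj {s : ι → ℝ} (hs : ∀ i, s i ≠ 0)
    {A : Matrix ι ι ℝ} {μ : ℝ} {v : ι → ℝ} (hv : v ≠ 0)
    (hAv : (diagonal s * A * diagonal s⁻¹) *ᵥ v = μ • v) :
    End.HasEigenvalue (toLin' A) μ := by
  set w := diagonal s⁻¹ *ᵥ v
  have hvw : diagonal s *ᵥ w = v := by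
    simp [w, mulVec_mulVec, diagonal_mul_diagonal, mul_inv_cancel₀ (hs _)]
  have hinj : Function.Injective (diagonal s *ᵥ ·) := by
    intro x y hxy
    funext i
    simpa [mulVec_diagonal, hs i] using congrFun hxy i
  refine End.hasEigenvalue_of_hasEigenvector (x := w) ⟨?_, ?_⟩
  · rw [End.mem_eigenspace_iff, toLin'_apply]
    refine hinj ?_
    dsimp only
    rw [← diagonal_conj_mulVec_diagonal hs, hvw, hAv, mulVec_smul, hvw]
  · intro hw
    exact hv (by rw [← hvw, hw, mulVec_zero])

noncomputable def normalizedLaplacian (W : Matrix ι ι ℝ) : Matrix ι ι ℝ :=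
  of fun i j => if i = j then 1 else -W i j / ∑ l, W i l

theorem normalizedLaplacian_eigenvalue_mem_Icc {W : Matrix ι ι ℝ} (hnonneg : ∀ i j, 0 ≤ W i j)
    (hdeg : ∀ i, 0 < ∑ l, W i l) {μ : ℝ}
    (hμ : End.HasEigenvalue (toLin' (normalizedLaplacian W)) μ) : μ ∈ Set.Icc 0 2 := by
  obtain ⟨k, hk⟩ := eigenvalue_mem_ball hμ
  have hradius : ∑ j ∈ Finset.univ.erase k, ‖normalizedLaplacian W k j‖ ≤ 1 :=
    calc ∑ j ∈ Finset.univ.erase k, ‖normalizedLaplacian W k j‖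
        = ∑ j ∈ Finset.univ.erase k, W k j / ∑ l, W k l :=
          Finset.sum_congr rfl fun j hj => by
            rw [normalizedLaplacian, of_apply, if_neg (Finset.ne_of_mem_erase hj).symm, norm_div,
              norm_neg, Real.norm_of_nonneg (hnonneg k j), Real.norm_of_nonneg (hdeg k).le]
      _ ≤ ∑ j, W k j / ∑ l, W k l :=
          Finset.sum_le_sum_of_subset_of_nonneg (Finset.erase_subset _ _)
            fun j _ _ => div_nonneg (hnonneg k j) (hdeg k).le
      _ = 1 := by rw [← Finset.sum_div, div_self (hdeg k).ne']
  rw [Metric.mem_closedBall, normalizedLaplacian, of_apply, if_pos rfl, Real.dist_eq] at hk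
  constructor <;> linarith [abs_le.mp (hk.trans hradius)]

noncomputable def symmNormalizedLaplacian (W : Matrix ι ι ℝ) : Matrix ι ι ℝ :=
  diagonal (sqrtDegree W) * normalizedLaplacian W * diagonal (sqrtDegree W)⁻¹

theorem symmNormalizedLaplacian_isHermitian {W : Matrix ι ι ℝ} (hsymm : W.IsSymm)
    (hdeg : ∀ i, 0 < ∑ l, W i l) : (symmNormalizedLaplacian W).IsHermitian := by
  refine IsHermitian.ext fun i j => ?_
  have hsq : ∀ i, sqrtDegree W i ^ 2 = ∑ l, W i l := fun i => Real.sq_sqrt (hdeg i).le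
  simp only [symmNormalizedLaplacian, diagonal_mul, mul_diagonal, normalizedLaplacian, of_apply,
    Pi.inv_apply, star_trivial]
  by_cases hij : i = j
  · subst hij; rfl
  · rw [if_neg hij, if_neg (Ne.symm hij), hsymm.apply i j, ← hsq i, ← hsq j]
    field_simp [(sqrtDegree_pos hdeg i).ne', (sqrtDegree_pos hdeg j).ne']

theorem symmNormalizedLaplacian_eigenvalue_mem_Icc {W : Matrix ι ι ℝ}
    (hnonneg : ∀ i j, 0 ≤ W i j) (hdeg : ∀ i, 0 < ∑ l, W i l) {μ : ℝ}
    (hμ : End.HasEigenvalue (toEuclideanLin (symmNormalizedLaplacian W)) μ) :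
    μ ∈ Set.Icc 0 2 := by
  obtain ⟨v, hv⟩ := hμ.exists_hasEigenvector
  refine normalizedLaplacian_eigenvalue_mem_Icc hnonneg hdeg <|
    hasEigenvalue_toLin'_of_diagonal_conj (fun i => (sqrtDegree_pos hdeg i).ne') (v := ofLp v)
      ?_ (congrArg ofLp hv.apply_eq_smul)
  exact fun h => hv.2 (WithLp.ofLp_injective 2 (by rw [h]; rfl))

end Graph

/-- If 0 < c < √2 and u(-1) = u(0), every solution of the discretized wave
equation on a graph with normalized Laplacian L remains bounded for t ≥ 0. -/
theorem wave_solution_bounded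
    (N : ℕ) (W : Matrix (Fin N) (Fin N) ℝ)
    (hsymm : W.IsSymm)
    (hnonneg : ∀ i j, 0 ≤ W i j)
    (hdeg : ∀ i, 0 < ∑ l, W i l)
    (L : Matrix (Fin N) (Fin N) ℝ)
    (hL : ∀ i j, L i j = if i = j then 1 else -(W i j) / (∑ l, W i l))
    (c : ℝ) (hc : 0 < c) (hc2 : c < Real.sqrt 2)
    (u : ℤ → Fin N → ℝ)
    (hinit : u (-1) = u 0)
    (hrec : ∀ t : ℤ, 1 ≤ t →
      u t = fun i => 2 * u (t-1) i - u (t-2) i - c^2 * L.mulVec (u (t-1)) i) :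
    ∃ C : ℝ, ∀ t : ℤ, 0 ≤ t → ∀ i, |u t i| ≤ C := by
  obtain rfl : L = normalizedLaplacian W := Matrix.ext hL
  have hs := sqrtDegree_pos hdeg
  let v : ℤ → EuclideanSpace ℝ (Fin N) := fun t => toLp 2 (diagonal (sqrtDegree W) *ᵥ u t)
  have hvrec : ∀ t : ℤ, 1 ≤ t → v t = (2 : ℝ) • v (t - 1) - v (t - 2) -
      c ^ 2 • toEuclideanLin (symmNormalizedLaplacian W) (v (t - 1)) := by
    intro t ht
    have hu : u t = (2 : ℝ) • u (t - 1) - u (t - 2) -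
        c ^ 2 • (normalizedLaplacian W *ᵥ u (t - 1)) :=
      hrec t ht
    simp only [v, hu, mulVec_sub, mulVec_smul, toLpLin_toLp, toLin'_apply, symmNormalizedLaplacian,
      diagonal_conj_mulVec_diagonal (fun i => (hs i).ne'), toLp_sub, toLp_smul]
  obtain ⟨C, hC⟩ := (isSymmetric_toEuclideanLin_iff.mpr
    (symmNormalizedLaplacian_isHermitian hsymm hdeg)).exists_norm_le_of_wave_recurrence
    (fun μ => symmNormalizedLaplacian_eigenvalue_mem_Icc hnonneg hdeg) hc.ne'
    ((Real.lt_sqrt hc.le).mp hc2) (by simp only [v, hinit]) hvrec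
  obtain ⟨M, hM⟩ := Finite.exists_le fun i => C / sqrtDegree W i
  refine ⟨M, fun t ht i => ?_⟩
  have hvi : v t i = sqrtDegree W i * u t i := by simp [v, mulVec_diagonal]
  calc |u t i| = |v t i| / sqrtDegree W i := by
        rw [hvi, abs_mul, abs_of_pos (hs i), mul_div_cancel_left₀ _ (hs i).ne']
    _ ≤ C / sqrtDegree W i :=
        div_le_div_of_nonneg_right ((PiLp.norm_apply_le (v t) i).trans (hC t ht)) (hs i).le
    _ ≤ M := hM i
end
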